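/- arXiv:1311.7691 — 8 statements merged into one kernel-verified Lean document; each statement's English description precedes it below -/
import Mathlib

section
/- Let 0 < α < 2, h > 0, x ∈ ℝ, and let u : ℝ → ℝ be four times differentiable on [x−h, x+h] with |u''''(ξ)| ≤ M₄ for all ξ ∈ [x−h, x+h]. Then |C₁,α ∫_0^h (2u(x) − u(x+y) − u(x−y)) y^{−1−α} dy + C₁,α (u(x+h) − 2u(x) + u(x−h)) / ((2−α) h^α)| ≤ C₁,α · (M₄/12) · h^{4−α} · (1/(4−α) + 1/(2−α)). In particular, the three-point centered difference approximates the singular part of the fractional Laplacian integral with error O(h^{4−α}). -/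
open MeasureTheory intervalIntegral Set

/-- The normalizing constant `C_{1,α}` of the one-dimensional fractional Laplacian. -/
noncomputable def Cna (α : ℝ) : ℝ :=
  α * 2 ^ (α - 1) * Real.Gamma ((α + 1) / 2) / (Real.sqrt Real.pi * Real.Gamma ((2 - α) / 2))

/-!
Write `R(t) = 2u(x) − u(x+t) − u(x−t) + u''(x) t²`. The quadratic term contributes
`−u''(x) h^{2−α}/(2−α)` to the integral and `u''(x) h^{2−α}/(2−α)` to the scaled centered
difference, so these cancel exactly and the error is
`∫₀^h R(y) y^{−1−α} dy − R(h)/((2−α) h^α)`.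
Since `R` and its first three derivatives vanish at `0` and `|R''''| ≤ 2 M₄`, integrating four
times gives `|R(t)| ≤ M₄ t⁴ / 12`, and both error terms are then bounded directly.
-/

lemma abs_le_mul_pow_succ_of_abs_deriv_le {h c : ℝ} {k : ℕ} {f f' : ℝ → ℝ}
    (hf : ∀ t ∈ Icc 0 h, HasDerivWithinAt f (f' t) (Icc 0 h) t) (h0 : f 0 = 0)
    (hf' : ∀ t ∈ Icc 0 h, |f' t| ≤ c * t ^ k) :
    ∀ t ∈ Icc 0 h, |f t| ≤ c / (k + 1) * t ^ (k + 1) := by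
  have hB : ∀ s : ℝ, HasDerivAt (fun s => c / (k + 1) * s ^ (k + 1)) (c * s ^ k) s := by
    intro s
    refine ((hasDerivAt_pow (k + 1) s).const_mul (c / (k + 1))).congr_deriv ?_
    have : (k : ℝ) + 1 ≠ 0 := by positivity
    push_cast
    field_simp
  intro t ht
  simpa using image_norm_le_of_norm_deriv_right_le_deriv_boundary
    (fun s hs => (hf s hs).continuousWithinAt)
    (fun s hs => (hf s (Ico_subset_Icc_self hs)).mono_of_mem_nhdsWithin
      (Icc_mem_nhdsGE_of_mem hs))
    (by simp [h0]) hB (fun s hs => hf' s (Ico_subset_Icc_self hs)) ht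

lemma abs_le_of_abs_fourth_deriv_le {h c : ℝ} {f f₁ f₂ f₃ f₄ : ℝ → ℝ}
    (hf : ∀ t ∈ Icc 0 h, HasDerivWithinAt f (f₁ t) (Icc 0 h) t)
    (hf₁ : ∀ t ∈ Icc 0 h, HasDerivWithinAt f₁ (f₂ t) (Icc 0 h) t)
    (hf₂ : ∀ t ∈ Icc 0 h, HasDerivWithinAt f₂ (f₃ t) (Icc 0 h) t)
    (hf₃ : ∀ t ∈ Icc 0 h, HasDerivWithinAt f₃ (f₄ t) (Icc 0 h) t)
    (h0 : f 0 = 0) (h₁0 : f₁ 0 = 0) (h₂0 : f₂ 0 = 0) (h₃0 : f₃ 0 = 0)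
    (hf₄ : ∀ t ∈ Icc 0 h, |f₄ t| ≤ c) :
    ∀ t ∈ Icc 0 h, |f t| ≤ c / 24 * t ^ 4 := by
  have b₃ := abs_le_mul_pow_succ_of_abs_deriv_le (k := 0) hf₃ h₃0 (by simpa using hf₄)
  have b₂ := abs_le_mul_pow_succ_of_abs_deriv_le hf₂ h₂0 b₃
  have b₁ := abs_le_mul_pow_succ_of_abs_deriv_le hf₁ h₁0 b₂
  have b₀ := abs_le_mul_pow_succ_of_abs_deriv_le hf h0 b₁
  intro t ht
  convert b₀ t ht using 2
  norm_num
  ring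

lemma add_mem_Icc_sub_add {x h t : ℝ} (ht : t ∈ Icc 0 h) : x + t ∈ Icc (x - h) (x + h) :=
  ⟨by linarith [ht.1, ht.2], by linarith [ht.2]⟩

lemma sub_mem_Icc_sub_add {x h t : ℝ} (ht : t ∈ Icc 0 h) : x - t ∈ Icc (x - h) (x + h) :=
  ⟨by linarith [ht.2], by linarith [ht.1, ht.2]⟩

lemma hasDerivWithinAt_comp_const_add_Icc {v v' : ℝ → ℝ} {x h t : ℝ}
    (hv : ∀ y ∈ Icc (x - h) (x + h), HasDerivWithinAt v (v' y) (Icc (x - h) (x + h)) y)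
    (ht : t ∈ Icc 0 h) :
    HasDerivWithinAt (fun s => v (x + s)) (v' (x + t)) (Icc 0 h) t := by
  simpa [Function.comp_def] using (hv _ (add_mem_Icc_sub_add ht)).comp t
    ((hasDerivWithinAt_id t _).const_add x) (fun _ hs => add_mem_Icc_sub_add hs)

lemma hasDerivWithinAt_comp_const_sub_Icc {v v' : ℝ → ℝ} {x h t : ℝ}
    (hv : ∀ y ∈ Icc (x - h) (x + h), HasDerivWithinAt v (v' y) (Icc (x - h) (x + h)) y)
    (ht : t ∈ Icc 0 h) :
    HasDerivWithinAt (fun s => v (x - s)) (-v' (x - t)) (Icc 0 h) t := by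
  simpa [Function.comp_def] using (hv _ (sub_mem_Icc_sub_add ht)).comp t
    ((hasDerivWithinAt_id t _).const_sub x) (fun _ hs => sub_mem_Icc_sub_add hs)

def centeredTaylorRemainder (u : ℝ → ℝ) (x c t : ℝ) : ℝ :=
  2 * u x - u (x + t) - u (x - t) + c * t ^ 2

lemma hasDerivWithinAt_centeredTaylorRemainder {u u₁ : ℝ → ℝ} {x h c t : ℝ}
    (hu₁ : ∀ y ∈ Icc (x - h) (x + h), HasDerivWithinAt u (u₁ y) (Icc (x - h) (x + h)) y)
    (ht : t ∈ Icc 0 h) :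
    HasDerivWithinAt (centeredTaylorRemainder u x c)
      (-u₁ (x + t) + u₁ (x - t) + 2 * c * t) (Icc 0 h) t := by
  refine ((((hasDerivWithinAt_const t _ (2 * u x)).sub
    (hasDerivWithinAt_comp_const_add_Icc hu₁ ht)).sub
    (hasDerivWithinAt_comp_const_sub_Icc hu₁ ht)).add
    ((hasDerivAt_pow 2 t).hasDerivWithinAt.const_mul c)).congr_deriv ?_
  push_cast
  ring

lemma abs_centeredTaylorRemainder_le {u u₁ u₂ u₃ u₄ : ℝ → ℝ} {x h M : ℝ}
    (hu₁ : ∀ y ∈ Icc (x - h) (x + h), HasDerivWithinAt u (u₁ y) (Icc (x - h) (x + h)) y)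
    (hu₂ : ∀ y ∈ Icc (x - h) (x + h), HasDerivWithinAt u₁ (u₂ y) (Icc (x - h) (x + h)) y)
    (hu₃ : ∀ y ∈ Icc (x - h) (x + h), HasDerivWithinAt u₂ (u₃ y) (Icc (x - h) (x + h)) y)
    (hu₄ : ∀ y ∈ Icc (x - h) (x + h), HasDerivWithinAt u₃ (u₄ y) (Icc (x - h) (x + h)) y)
    (hM : ∀ y ∈ Icc (x - h) (x + h), |u₄ y| ≤ M) :
    ∀ t ∈ Icc 0 h, |centeredTaylorRemainder u x (u₂ x) t| ≤ M / 12 * t ^ 4 := by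
  have key := abs_le_of_abs_fourth_deriv_le (c := 2 * M)
    (f₂ := fun t => -u₂ (x + t) - u₂ (x - t) + 2 * u₂ x)
    (f₃ := fun t => -u₃ (x + t) + u₃ (x - t)) (f₄ := fun t => -u₄ (x + t) - u₄ (x - t))
    (fun t ht => hasDerivWithinAt_centeredTaylorRemainder hu₁ ht)
    (fun t ht => by
      refine (((hasDerivWithinAt_comp_const_add_Icc hu₂ ht).neg.add
        (hasDerivWithinAt_comp_const_sub_Icc hu₂ ht)).add
        ((hasDerivWithinAt_id t _).const_mul (2 * u₂ x))).congr_deriv ?_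
      ring)
    (fun t ht => by
      refine (((hasDerivWithinAt_comp_const_add_Icc hu₃ ht).neg.sub
        (hasDerivWithinAt_comp_const_sub_Icc hu₃ ht)).add
        (hasDerivWithinAt_const t _ (2 * u₂ x))).congr_deriv ?_
      ring)
    (fun t ht => ((hasDerivWithinAt_comp_const_add_Icc hu₄ ht).neg.add
        (hasDerivWithinAt_comp_const_sub_Icc hu₄ ht)).congr_deriv (by ring))
    (by simp [centeredTaylorRemainder]; ring) (by simp) (by simp; ring) (by simp)
    (fun t ht => by
      have := abs_add_le (u₄ (x + t)) (u₄ (x - t))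
      rw [← neg_add', abs_neg]
      linarith [hM _ (add_mem_Icc_sub_add ht), hM _ (sub_mem_Icc_sub_add ht)])
  intro t ht
  linarith [key t ht]

lemma pow_eq_rpow_sub_mul_rpow {y : ℝ} (hy : 0 < y) (n : ℕ) (α : ℝ) :
    y ^ n = y ^ ((n : ℝ) - α) * y ^ α := by
  rw [← Real.rpow_add hy, sub_add_cancel, Real.rpow_natCast]

lemma pow_mul_rpow_neg_one_sub {y : ℝ} (hy : 0 < y) (n : ℕ) (α : ℝ) :
    y ^ n * y ^ (-1 - α) = y ^ ((n : ℝ) - 1 - α) := by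
  rw [← Real.rpow_natCast, ← Real.rpow_add hy]
  ring_nf

lemma integral_zero_rpow {s : ℝ} (hs : -1 < s) (h : ℝ) :
    ∫ y in (0 : ℝ)..h, y ^ s = h ^ (s + 1) / (s + 1) := by
  rw [integral_rpow (Or.inl hs), Real.zero_rpow (by linarith), sub_zero]

lemma norm_mul_rpow_le_of_abs_le {a y C α : ℝ} {n : ℕ} (hy : 0 < y) (ha : |a| ≤ C * y ^ n) :
    ‖a * y ^ (-1 - α)‖ ≤ C * y ^ ((n : ℝ) - 1 - α) := by
  have hpos : 0 ≤ y ^ (-1 - α) := Real.rpow_nonneg hy.le _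
  rw [norm_mul, Real.norm_eq_abs, Real.norm_of_nonneg hpos, ← pow_mul_rpow_neg_one_sub hy,
    ← mul_assoc]
  exact mul_le_mul_of_nonneg_right ha hpos

section WeightedIntegral

variable {r : ℝ → ℝ} {C α h : ℝ} {n : ℕ}

lemma intervalIntegrable_mul_rpow_of_abs_le (hh : 0 ≤ h) (hαn : α < n)
    (hrc : ContinuousOn r (Ioc 0 h)) (hr : ∀ y ∈ Ioc 0 h, |r y| ≤ C * y ^ n) :
    IntervalIntegrable (fun y => r y * y ^ (-1 - α)) volume 0 h := by
  have hg : IntegrableOn (fun y : ℝ => C * y ^ ((n : ℝ) - 1 - α)) (Ioc 0 h) :=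
    (intervalIntegrable_iff_integrableOn_Ioc_of_le hh).mp
      ((intervalIntegrable_rpow' (by linarith)).const_mul C)
  have hmeas : ContinuousOn (fun y : ℝ => r y * y ^ (-1 - α)) (Ioc 0 h) :=
    hrc.mul (continuousOn_id.rpow_const fun y hy => Or.inl hy.1.ne')
  rw [intervalIntegrable_iff_integrableOn_Ioc_of_le hh]
  exact hg.mono' (hmeas.aestronglyMeasurable measurableSet_Ioc)
    ((ae_restrict_iff' measurableSet_Ioc).2
      (ae_of_all _ fun y hy => norm_mul_rpow_le_of_abs_le hy.1 (hr y hy)))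

lemma abs_integral_mul_rpow_le (hh : 0 ≤ h) (hαn : α < n)
    (hr : ∀ y ∈ Ioc 0 h, |r y| ≤ C * y ^ n) :
    |∫ y in (0 : ℝ)..h, r y * y ^ (-1 - α)|
      ≤ C * (h ^ ((n : ℝ) - α) / ((n : ℝ) - α)) := by
  calc |∫ y in (0 : ℝ)..h, r y * y ^ (-1 - α)|
      ≤ ∫ y in (0 : ℝ)..h, C * y ^ ((n : ℝ) - 1 - α) :=
        norm_integral_le_of_norm_le hh
          (ae_of_all _ fun y hy => norm_mul_rpow_le_of_abs_le hy.1 (hr y hy))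
          ((intervalIntegrable_rpow' (by linarith)).const_mul C)
    _ = C * (h ^ ((n : ℝ) - α) / ((n : ℝ) - α)) := by
        rw [intervalIntegral.integral_const_mul, integral_zero_rpow (by linarith)]
        ring_nf

end WeightedIntegral

lemma integral_add_centered_difference_eq {α h : ℝ} (hα : α < 2) (hh : 0 < h)
    (u : ℝ → ℝ) (x c : ℝ)
    (hR : IntervalIntegrable (fun y => centeredTaylorRemainder u x c y * y ^ (-1 - α))
      volume 0 h) :
    (∫ y in (0 : ℝ)..h, (2 * u x - u (x + y) - u (x - y)) * y ^ (-1 - α))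
        + (u (x + h) - 2 * u x + u (x - h)) / ((2 - α) * h ^ α)
      = (∫ y in (0 : ℝ)..h, centeredTaylorRemainder u x c y * y ^ (-1 - α))
        - centeredTaylorRemainder u x c h / ((2 - α) * h ^ α) := by
  have hsplit : (∫ y in (0 : ℝ)..h, (2 * u x - u (x + y) - u (x - y)) * y ^ (-1 - α))
      = ∫ y in (0 : ℝ)..h,
          (-c * y ^ (1 - α) + centeredTaylorRemainder u x c y * y ^ (-1 - α)) := by
    refine integral_congr_ae (ae_of_all _ fun y hy => ?_)
    rw [uIoc_of_le hh.le] at hy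
    have hy2 := pow_mul_rpow_neg_one_sub hy.1 2 α
    norm_num at hy2
    rw [← hy2, centeredTaylorRemainder]
    ring
  have hαne : 2 - α ≠ 0 := by linarith
  have hhα : h ^ α ≠ 0 := (Real.rpow_pos_of_pos hh α).ne'
  rw [hsplit, integral_add ((intervalIntegrable_rpow' (by linarith)).const_mul _) hR,
    intervalIntegral.integral_const_mul, integral_zero_rpow (by linarith),
    show 1 - α + 1 = 2 - α by ring]
  have hpow : h ^ 2 = h ^ (2 - α) * h ^ α := by exact_mod_cast pow_eq_rpow_sub_mul_rpow hh 2 α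
  simp only [centeredTaylorRemainder, hpow]
  field_simp
  ring

lemma Cna_nonneg {α : ℝ} (hα0 : 0 ≤ α) (hα2 : α ≤ 2) : 0 ≤ Cna α := by
  unfold Cna
  have := Real.Gamma_nonneg_of_nonneg (s := (α + 1) / 2) (by linarith)
  have := Real.Gamma_nonneg_of_nonneg (s := (2 - α) / 2) (by linarith)
  positivity

/-- The three-point centered difference approximates the singular part of the fractional
Laplacian integral with error `O(h^{4−α})`: if `u` is four times differentiable on
`[x−h, x+h]` with `|u''''| ≤ M₄` there, then
`|C₁,α ∫_0^h (2u(x) − u(x+y) − u(x−y)) y^{−1−α} dy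
   + C₁,α (u(x+h) − 2u(x) + u(x−h))/((2−α) h^α)|
 ≤ C₁,α (M₄/12) h^{4−α} (1/(4−α) + 1/(2−α))`. -/
theorem singular_part_centered_difference (α : ℝ) (hα0 : 0 < α) (hα2 : α < 2)
    (h : ℝ) (hh : 0 < h) (x M4 : ℝ)
    (u u1 u2 u3 u4 : ℝ → ℝ)
    (hu1 : ∀ y ∈ Set.Icc (x - h) (x + h), HasDerivWithinAt u (u1 y) (Set.Icc (x - h) (x + h)) y)
    (hu2 : ∀ y ∈ Set.Icc (x - h) (x + h), HasDerivWithinAt u1 (u2 y) (Set.Icc (x - h) (x + h)) y)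
    (hu3 : ∀ y ∈ Set.Icc (x - h) (x + h), HasDerivWithinAt u2 (u3 y) (Set.Icc (x - h) (x + h)) y)
    (hu4 : ∀ y ∈ Set.Icc (x - h) (x + h), HasDerivWithinAt u3 (u4 y) (Set.Icc (x - h) (x + h)) y)
    (hM4 : ∀ y ∈ Set.Icc (x - h) (x + h), |u4 y| ≤ M4) :
    |Cna α * (∫ y in (0:ℝ)..h, (2 * u x - u (x + y) - u (x - y)) * y ^ (-1 - α))
        + Cna α * (u (x + h) - 2 * u x + u (x - h)) / ((2 - α) * h ^ α)|
      ≤ Cna α * (M4 / 12) * h ^ (4 - α) * (1 / (4 - α) + 1 / (2 - α)) := by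
  set R := centeredTaylorRemainder u x (u2 x)
  have hR := abs_centeredTaylorRemainder_le hu1 hu2 hu3 hu4 hM4
  have hR' : ∀ y ∈ Ioc 0 h, |R y| ≤ M4 / 12 * y ^ 4 := fun y hy => hR y (Ioc_subset_Icc_self hy)
  have hRc : ContinuousOn R (Ioc 0 h) := fun t ht =>
    (hasDerivWithinAt_centeredTaylorRemainder hu1
      (Ioc_subset_Icc_self ht)).continuousWithinAt.mono Ioc_subset_Icc_self
  have hα4 : α < ((4 : ℕ) : ℝ) := by norm_num; linarith
  have hJ := abs_integral_mul_rpow_le hh.le hα4 hR'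
  have hden : 0 < (2 - α) * h ^ α := mul_pos (by linarith) (Real.rpow_pos_of_pos hh α)
  rw [mul_div_assoc, ← mul_add, integral_add_centered_difference_eq hα2 hh u x (u2 x)
      (intervalIntegrable_mul_rpow_of_abs_le hh.le hα4 hRc hR'),
    abs_mul, abs_of_nonneg (Cna_nonneg hα0.le hα2.le)]
  calc Cna α * |(∫ y in (0 : ℝ)..h, R y * y ^ (-1 - α)) - R h / ((2 - α) * h ^ α)|
      ≤ Cna α * (M4 / 12 * (h ^ ((4 : ℕ) - α) / ((4 : ℕ) - α))
          + M4 / 12 * h ^ 4 / ((2 - α) * h ^ α)) := by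
        refine mul_le_mul_of_nonneg_left ((abs_sub _ _).trans (add_le_add hJ ?_))
          (Cna_nonneg hα0.le hα2.le)
        rw [abs_div, abs_of_pos hden]
        gcongr
        exact hR h ⟨hh.le, le_rfl⟩
    _ = Cna α * (M4 / 12) * h ^ (4 - α) * (1 / (4 - α) + 1 / (2 - α)) := by
        rw [pow_eq_rpow_sub_mul_rpow hh 4 α]
        have : (4 : ℝ) - α ≠ 0 := by linarith
        have : (2 : ℝ) - α ≠ 0 := by linarith
        have : h ^ α ≠ 0 := (Real.rpow_pos_of_pos hh α).ne'
        push_cast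
        field_simp
end

section
/- Let 0 < α < 2 and h > 0. Then the linear-interpolation weights are all strictly positive: w_j^T > 0 for every j ∈ ℤ with j ≠ 0. -/
open Real

/-- The antiderivative `F` with `F''(t) = C_{1,α} t^{−1−α}` for `t > 0`. -/
noncomputable def Ffun (α t : ℝ) : ℝ :=
  if α = 1 then -(Cna 1) * Real.log t else Cna α * t ^ (1 - α) / ((α - 1) * α)

/-- The derivative `F'` of `Ffun`: `F'(t) = −C_{1,α} t^{−α}/α` for `t > 0`
(valid in both cases `α ≠ 1` and `α = 1`). -/
noncomputable def Fd (α t : ℝ) : ℝ := -(Cna α) * t ^ (-α) / α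

/-- The linear-interpolation weights `w_j^T` (with the irrelevant `w_0` set to `0`). -/
noncomputable def wT (α h : ℝ) (j : ℤ) : ℝ :=
  if j = 0 then 0
  else if j.natAbs = 1 then
    h ^ (-α) * (Cna α / (2 - α) - Fd α 1 + Ffun α 2 - Ffun α 1)
  else
    h ^ (-α) * (Ffun α ((j.natAbs : ℝ) + 1) - 2 * Ffun α (j.natAbs : ℝ)
      + Ffun α ((j.natAbs : ℝ) - 1))

lemma Cna_pos {α : ℝ} (hα0 : 0 < α) (hα2 : α < 2) : 0 < Cna α := by
  unfold Cna
  apply div_pos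
  · have := Real.Gamma_pos_of_pos (by linarith : (0:ℝ) < (α + 1) / 2)
    positivity
  · have := Real.Gamma_pos_of_pos (by linarith : (0:ℝ) < (2 - α) / 2)
    positivity

lemma hasDerivAt_Ffun {α : ℝ} (hα0 : 0 < α) {t : ℝ} (ht : 0 < t) :
    HasDerivAt (Ffun α) (Fd α t) t := by
  by_cases h1 : α = 1
  · subst h1
    have : HasDerivAt (fun s : ℝ => -(Cna 1) * Real.log s) (-(Cna 1) * t⁻¹) t :=
      (Real.hasDerivAt_log ht.ne').const_mul _
    have heq : (fun s : ℝ => -(Cna 1) * Real.log s) = Ffun 1 := by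
      funext s; simp [Ffun]
    rw [heq] at this
    convert this using 1
    rw [Fd]
    rw [show (-(1:ℝ)) = ((-1 : ℤ) : ℝ) by norm_num, Real.rpow_intCast]
    simp
  · have hd : HasDerivAt (fun s : ℝ => Cna α * s ^ (1 - α) / ((α - 1) * α))
        (Cna α * ((1 - α) * t ^ (1 - α - 1)) / ((α - 1) * α)) t := by
      have := (Real.hasDerivAt_rpow_const (p := 1 - α) (Or.inl ht.ne')).const_mul (Cna α)
      exact this.div_const _
    have heq : (fun s : ℝ => Cna α * s ^ (1 - α) / ((α - 1) * α)) = Ffun α := by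
      funext s; simp [Ffun, h1]
    rw [heq] at hd
    convert hd using 1
    rw [Fd, show (1 - α - 1 : ℝ) = -α by ring]
    have hα1 : α - 1 ≠ 0 := sub_ne_zero.mpr h1
    field_simp
    ring

lemma Fd_strictMono {α : ℝ} (hα0 : 0 < α) (hα2 : α < 2) {s t : ℝ}
    (hs : 0 < s) (hst : s < t) : Fd α s < Fd α t := by
  have hC := Cna_pos hα0 hα2
  have h := Real.rpow_lt_rpow_of_neg hs hst (by linarith : -α < 0)
  rw [Fd, Fd, div_lt_div_iff_of_pos_right hα0]
  nlinarith

/-- Mean value theorem for `Ffun`. -/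
lemma Ffun_slope {α : ℝ} (hα0 : 0 < α) {a b : ℝ} (ha : 0 < a) (hab : a < b) :
    ∃ c, a < c ∧ c < b ∧ Ffun α b - Ffun α a = Fd α c * (b - a) := by
  have hcont : ContinuousOn (Ffun α) (Set.Icc a b) := by
    intro x hx
    exact (hasDerivAt_Ffun hα0 (lt_of_lt_of_le ha hx.1)).continuousAt.continuousWithinAt
  obtain ⟨c, hc, hceq⟩ := exists_hasDerivAt_eq_slope (Ffun α) (Fd α) hab hcont
    (fun x hx => hasDerivAt_Ffun hα0 (lt_trans ha hx.1))
  refine ⟨c, hc.1, hc.2, ?_⟩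
  rw [hceq, div_mul_cancel₀ _ (by linarith : b - a ≠ 0)]

/-- Positivity of the linear-interpolation weights: `w_j^T > 0` for all `j ≠ 0`. -/
theorem wT_pos (α : ℝ) (hα0 : 0 < α) (hα2 : α < 2) (h : ℝ) (hh : 0 < h) :
    ∀ j : ℤ, j ≠ 0 → 0 < wT α h j := by
  intro j hj
  have hC := Cna_pos hα0 hα2
  have hhp : (0:ℝ) < h ^ (-α) := Real.rpow_pos_of_pos hh _
  rw [wT, if_neg hj]
  by_cases h1 : j.natAbs = 1
  · rw [if_pos h1]
    apply mul_pos hhp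
    obtain ⟨c, hc1, hc2, hceq⟩ := Ffun_slope (α := α) hα0 (by norm_num : (0:ℝ) < 1)
      (by norm_num : (1:ℝ) < 2)
    have hmono := Fd_strictMono hα0 hα2 (by norm_num : (0:ℝ) < 1) hc1
    have hpos : 0 < Cna α / (2 - α) := div_pos hC (by linarith)
    nlinarith
  · rw [if_neg h1]
    apply mul_pos hhp
    have hn2 : 2 ≤ j.natAbs := by omega
    set n : ℝ := (j.natAbs : ℝ) with hn
    have hn2' : (2:ℝ) ≤ n := by rw [hn]; exact_mod_cast hn2
    obtain ⟨c₁, hc₁1, hc₁2, hceq₁⟩ := Ffun_slope (α := α) hα0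
      (by linarith : (0:ℝ) < n - 1) (by linarith : n - 1 < n)
    obtain ⟨c₂, hc₂1, hc₂2, hceq₂⟩ := Ffun_slope (α := α) hα0
      (by linarith : (0:ℝ) < n) (by linarith : n < n + 1)
    have hmono := Fd_strictMono hα0 hα2 (lt_trans (by linarith) hc₁1)
      (lt_trans hc₁2 hc₂1)
    nlinarith
end

section
/- Fix h > 0 and j ∈ ℤ with j ≠ 0, and regard the linear-interpolation weight w_j^T as a function of α ∈ (0,2). Then as α → 2⁻, w_j^T converges to h^{−2} if |j| = 1, and w_j^T converges to 0 if |j| ≥ 2. Consequently, in the limit α → 2⁻ the discrete operator Σ_{j≠0}(u_i − u_{i−j})w_j^T becomes the standard three-point centered difference −(u_{i+1} − 2u_i + u_{i−1})/h². -/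
/-!
By `Γ(x + 1) = x Γ(x)` with `x = (2 - α)/2`, the constant `C_{1,α}` equals `2 - α` times
a function continuous at `α = 2` with value `1`. So `C_{1,α} → 0` and `C_{1,α}/(2 - α) → 1`:
every `F`- and `F'`-term of the weights vanishes in the limit, and only the term
`C_{1,α}/(2 - α)` of `w_{±1}` survives, giving `h^{-2}`.

For the operator we use dominated convergence for series. For `α ∈ (3/2, 2)` and `m = |j| ≥ 2`,
`w_j` is a coefficient tending to `0` times the second difference of `t ↦ t^{1-α}` at `m`; by
monotonicity that is at most `(m-1)^{1-α} - (m+1)^{1-α}`, and since `x ≤ x^{α-1}` on `[0, 1]`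
this is at most `(m-1)^{1-α} · 2/(m+1)`, a multiple of `m^{-3/2}` uniformly in `α`.
-/

open Real

open Filter Topology

open Set

lemma Real.continuousAt_Gamma_of_pos {x : ℝ} (hx : 0 < x) : ContinuousAt Gamma x :=
  (differentiableOn_Gamma_Ioi.differentiableAt (Ioi_mem_nhds hx)).continuousAt

lemma Cna_div_two_sub_eq {α : ℝ} (hα : α < 2) :
    Cna α / (2 - α) =
      α * 2 ^ (α - 1) * Gamma ((α + 1) / 2) / (2 * √π * Gamma ((4 - α) / 2)) := by
  have hpos : 0 < (2 - α) / 2 := by linarith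
  have hΓ := (Gamma_pos_of_pos hpos).ne'
  rw [Cna, show (4 - α) / 2 = (2 - α) / 2 + 1 by ring, Gamma_add_one hpos.ne']
  field_simp

lemma tendsto_Cna_div_two_sub : Tendsto (fun α => Cna α / (2 - α)) (𝓝[<] 2) (𝓝 1) := by
  have hcont : ContinuousAt (fun α : ℝ =>
      α * 2 ^ (α - 1) * Gamma ((α + 1) / 2) / (2 * √π * Gamma ((4 - α) / 2))) 2 := by
    have hΓ₁ := (continuousAt_Gamma_of_pos (x := (2 + 1) / 2) (by norm_num)).comp
      (f := fun α : ℝ => (α + 1) / 2) (by fun_prop)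
    have hΓ₂ := (continuousAt_Gamma_of_pos (x := (4 - 2) / 2) (by norm_num)).comp
      (f := fun α : ℝ => (4 - α) / 2) (by fun_prop)
    refine ContinuousAt.div ((continuousAt_id.mul (by fun_prop (disch := norm_num))).mul hΓ₁)
      (continuousAt_const.mul hΓ₂) ?_
    norm_num [Gamma_one, pi_pos.le]
  have hval : (2 : ℝ) * 2 ^ ((2 : ℝ) - 1) * Gamma ((2 + 1) / 2) /
      (2 * √π * Gamma ((4 - 2) / 2)) = 1 := by
    rw [show ((2 : ℝ) + 1) / 2 = 1 / 2 + 1 by norm_num, Gamma_add_one (by norm_num),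
      Gamma_one_half_eq, show ((4 : ℝ) - 2) / 2 = 1 by norm_num, Gamma_one]
    have hπ : 0 < √π := sqrt_pos.2 pi_pos
    field_simp
    norm_num
  refine (hval ▸ hcont.tendsto.mono_left nhdsWithin_le_nhds).congr' ?_
  filter_upwards [self_mem_nhdsWithin] with α hα using (Cna_div_two_sub_eq hα).symm

lemma tendsto_Cna : Tendsto Cna (𝓝[<] 2) (𝓝 0) := by
  have hsub : Tendsto (fun α : ℝ => 2 - α) (𝓝[<] 2) (𝓝 0) :=
    tendsto_nhdsWithin_of_tendsto_nhds (by simpa using (continuous_sub_left (2 : ℝ)).tendsto 2)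
  have hlim := hsub.mul tendsto_Cna_div_two_sub
  rw [zero_mul] at hlim
  refine hlim.congr' ?_
  filter_upwards [self_mem_nhdsWithin] with α hα
  have hα' : (2 : ℝ) - α ≠ 0 := (sub_pos.2 (mem_Iio.1 hα)).ne'
  field_simp

lemma tendsto_Ffun {t : ℝ} (ht : 0 < t) : Tendsto (fun α => Ffun α t) (𝓝[<] 2) (𝓝 0) := by
  have hcont : ContinuousAt (fun α : ℝ => t ^ (1 - α) / ((α - 1) * α)) 2 := by
    fun_prop (disch := first | positivity | norm_num)
  have hlim := tendsto_Cna.mul (hcont.tendsto.mono_left nhdsWithin_le_nhds)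
  rw [zero_mul] at hlim
  refine hlim.congr' ?_
  filter_upwards [Ioo_mem_nhdsLT one_lt_two] with α hα
  rw [Ffun, if_neg hα.1.ne', mul_div_assoc]

lemma tendsto_Fd_one : Tendsto (fun α => Fd α 1) (𝓝[<] 2) (𝓝 0) := by
  have hlim : Tendsto (fun α => -Cna α / α) (𝓝[<] 2) (𝓝 (-0 / 2)) :=
    tendsto_Cna.neg.div (tendsto_id.mono_left nhdsWithin_le_nhds) two_ne_zero
  simpa [Fd] using hlim

lemma tendsto_rpow_neg_nhdsLT {h : ℝ} (hh : 0 < h) :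
    Tendsto (fun α : ℝ => h ^ (-α)) (𝓝[<] 2) (𝓝 (h ^ (-(2 : ℝ)))) :=
  (ContinuousAt.tendsto (x := 2) (by fun_prop (disch := positivity))).mono_left nhdsWithin_le_nhds

lemma tendsto_wT_of_natAbs_eq_one {h : ℝ} (hh : 0 < h) {j : ℤ} (hj : j.natAbs = 1) :
    Tendsto (fun α => wT α h j) (𝓝[<] 2) (𝓝 (h ^ (-(2 : ℝ)))) := by
  have hj0 : j ≠ 0 := by rintro rfl; simp at hj
  simp only [wT, if_neg hj0, if_pos hj]
  simpa using (tendsto_rpow_neg_nhdsLT hh).mul (((tendsto_Cna_div_two_sub.sub tendsto_Fd_one).add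
    (tendsto_Ffun two_pos)).sub (tendsto_Ffun one_pos))

lemma tendsto_wT_of_two_le_natAbs {h : ℝ} (hh : 0 < h) {j : ℤ} (hj : 2 ≤ j.natAbs) :
    Tendsto (fun α => wT α h j) (𝓝[<] 2) (𝓝 0) := by
  have hj0 : j ≠ 0 := by rintro rfl; simp at hj
  have hm : (2 : ℝ) ≤ j.natAbs := by exact_mod_cast hj
  simp only [wT, if_neg hj0, if_neg (by omega : j.natAbs ≠ 1)]
  have hlim := (tendsto_rpow_neg_nhdsLT hh).mul
    (((tendsto_Ffun (t := j.natAbs + 1) (by linarith)).sub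
      ((tendsto_Ffun (t := j.natAbs) (by linarith)).const_mul 2)).add
        (tendsto_Ffun (t := j.natAbs - 1) (by linarith)))
  simpa using hlim

lemma tendsto_wT {h : ℝ} (hh : 0 < h) (j : ℤ) :
    Tendsto (fun α => wT α h j) (𝓝[<] 2)
      (𝓝 (if j.natAbs = 1 then h ^ (-(2 : ℝ)) else 0)) := by
  split_ifs with hj
  · exact tendsto_wT_of_natAbs_eq_one hh hj
  · rcases eq_or_ne j 0 with rfl | hj0
    · simp [wT]
    · exact tendsto_wT_of_two_le_natAbs hh (by omega)

lemma rpow_neg_sub_rpow_neg_le {a b q : ℝ} (ha : 0 < a) (hab : a ≤ b) (hq : q ≤ 1) :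
    a ^ (-q) - b ^ (-q) ≤ a ^ (-q) * (1 - a / b) := by
  have hb : 0 < b := ha.trans_le hab
  calc a ^ (-q) - b ^ (-q) = a ^ (-q) * (1 - (a / b) ^ q) := by
        rw [div_rpow ha.le hb.le, rpow_neg ha.le, rpow_neg hb.le]
        have haq : a ^ q ≠ 0 := (rpow_pos_of_pos ha q).ne'
        field_simp
    _ ≤ a ^ (-q) * (1 - a / b) := by
        gcongr
        exact self_le_rpow_of_le_one (by positivity) (div_le_one_of_le₀ hab hb.le) hq

lemma sub_one_rpow_neg_le {m p : ℝ} (hm : 2 ≤ m) (hp : 0 ≤ p) :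
    (m - 1) ^ (-p) ≤ 2 ^ p * m ^ (-p) :=
  calc (m - 1) ^ (-p) ≤ (m / 2) ^ (-p) :=
        rpow_le_rpow_of_nonpos (by positivity) (by linarith) (neg_nonpos.2 hp)
    _ = 2 ^ p * m ^ (-p) := by
        rw [div_rpow (by linarith) zero_le_two, rpow_neg zero_le_two, div_inv_eq_mul, mul_comm]

lemma abs_rpow_neg_secondDiff_le {m q : ℝ} (hm : 2 ≤ m) (hq : 1 / 2 ≤ q) (hq1 : q ≤ 1) :
    |(m + 1) ^ (-q) - 2 * m ^ (-q) + (m - 1) ^ (-q)| ≤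
      2 * 2 ^ (3 / 2 : ℝ) * m ^ (-(3 / 2) : ℝ) := by
  have hm1 : 0 < m - 1 := by linarith
  have hle₁ : (m + 1) ^ (-q) ≤ m ^ (-q) :=
    rpow_le_rpow_of_nonpos (by linarith) (by linarith) (by linarith)
  have hle₂ : m ^ (-q) ≤ (m - 1) ^ (-q) :=
    rpow_le_rpow_of_nonpos hm1 (by linarith) (by linarith)
  calc |(m + 1) ^ (-q) - 2 * m ^ (-q) + (m - 1) ^ (-q)| ≤ (m - 1) ^ (-q) - (m + 1) ^ (-q) :=
        abs_le.2 ⟨by linarith, by linarith⟩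
    _ ≤ (m - 1) ^ (-q) * (1 - (m - 1) / (m + 1)) :=
        rpow_neg_sub_rpow_neg_le hm1 (by linarith) hq1
    _ ≤ (m - 1) ^ (-(1 / 2) : ℝ) * (2 / (m - 1)) := by
        rw [one_sub_div (by linarith), show m + 1 - (m - 1) = 2 by ring]
        gcongr <;> linarith
    _ = 2 * (m - 1) ^ (-(3 / 2) : ℝ) := by
        rw [show (-(3 / 2) : ℝ) = -(1 / 2) - 1 by norm_num, rpow_sub_one hm1.ne']
        ring
    _ ≤ 2 * (2 ^ (3 / 2 : ℝ) * m ^ (-(3 / 2) : ℝ)) := by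
        gcongr
        exact sub_one_rpow_neg_le hm (by norm_num)
    _ = 2 * 2 ^ (3 / 2 : ℝ) * m ^ (-(3 / 2) : ℝ) := by ring

lemma wT_natAbs (α h : ℝ) (j : ℤ) : wT α h j = wT α h j.natAbs := by
  simp [wT, Int.natAbs_abs]

lemma wT_eq_of_two_le_natAbs {α h : ℝ} (hα : α ≠ 1) {j : ℤ} (hj : 2 ≤ j.natAbs) :
    wT α h j = h ^ (-α) * Cna α / ((α - 1) * α) *
      (((j.natAbs : ℝ) + 1) ^ (1 - α) - 2 * (j.natAbs : ℝ) ^ (1 - α)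
        + ((j.natAbs : ℝ) - 1) ^ (1 - α)) := by
  have hj0 : j ≠ 0 := by rintro rfl; simp at hj
  simp only [wT, Ffun, if_neg hj0, if_neg (by omega : j.natAbs ≠ 1), if_neg hα]
  ring

lemma exists_eventually_abs_wT_le {h : ℝ} (hh : 0 < h) :
    ∃ K, ∀ᶠ α in 𝓝[<] 2, ∀ j : ℤ,
      |wT α h j| ≤ K * |(j : ℝ)| ^ (-(3 / 2) : ℝ) := by
  have hcoef : ∀ᶠ α in 𝓝[<] 2, |h ^ (-α) * Cna α / ((α - 1) * α)| ≤ 1 := by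
    have hden : Tendsto (fun α : ℝ => (α - 1) * α) (𝓝[<] 2) (𝓝 ((2 - 1) * 2)) :=
      (ContinuousAt.tendsto (by fun_prop)).mono_left nhdsWithin_le_nhds
    have hlim : Tendsto (fun α => |h ^ (-α) * Cna α / ((α - 1) * α)|) (𝓝[<] 2)
        (𝓝 |h ^ (-(2 : ℝ)) * 0 / ((2 - 1) * 2)|) :=
      (((tendsto_rpow_neg_nhdsLT hh).mul tendsto_Cna).div hden (by norm_num)).abs
    rw [mul_zero, zero_div, abs_zero] at hlim
    exact hlim.eventually_le_const one_pos
  have hone : ∀ᶠ α in 𝓝[<] 2, |wT α h 1| ≤ h ^ (-(2 : ℝ)) + 1 :=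
    (tendsto_wT_of_natAbs_eq_one hh rfl).abs.eventually_le_const
      (by rw [abs_of_pos (rpow_pos_of_pos hh _)]; linarith)
  refine ⟨max (h ^ (-(2 : ℝ)) + 1) (2 * 2 ^ (3 / 2 : ℝ)), ?_⟩
  filter_upwards [hcoef, hone, Ioo_mem_nhdsLT (by norm_num : (3 / 2 : ℝ) < 2)]
    with α hcoef hone hα j
  have habs : |(j : ℝ)| = j.natAbs := by rw [Nat.cast_natAbs, Int.cast_abs]
  obtain hj | hj | hj : j.natAbs = 0 ∨ j.natAbs = 1 ∨ 2 ≤ j.natAbs := by omega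
  · rw [Int.natAbs_eq_zero.1 hj, wT, if_pos rfl, abs_zero]
    positivity
  · rw [habs, wT_natAbs, hj]
    simp only [Nat.cast_one, one_rpow, mul_one]
    exact hone.trans (le_max_left _ _)
  · have hm : (2 : ℝ) ≤ j.natAbs := by exact_mod_cast hj
    rw [wT_eq_of_two_le_natAbs (by linarith [hα.1]) hj, abs_mul, habs, ← neg_sub α 1]
    calc _ ≤ 1 * (2 * 2 ^ (3 / 2 : ℝ) * (j.natAbs : ℝ) ^ (-(3 / 2) : ℝ)) :=
          mul_le_mul hcoef
            (abs_rpow_neg_secondDiff_le hm (by linarith [hα.1]) (by linarith [hα.2]))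
            (abs_nonneg _) zero_le_one
      _ ≤ _ := by
          rw [one_mul]
          gcongr
          exact le_max_right _ _

lemma tendsto_tsum_wT {h : ℝ} (hh : 0 < h) {u : ℤ → ℝ} (hu : ∃ B, ∀ i, |u i| ≤ B)
    (i : ℤ) :
    Tendsto (fun α => ∑' j : {j : ℤ // j ≠ 0}, (u i - u (i - j)) * wT α h j) (𝓝[<] 2)
      (𝓝 (-(u (i + 1) - 2 * u i + u (i - 1)) / h ^ 2)) := by
  obtain ⟨B, hB⟩ := hu
  obtain ⟨K, hK⟩ := exists_eventually_abs_wT_le hh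
  have hdiff : ∀ j, |u i - u (i - j)| ≤ 2 * B := fun j =>
    (abs_sub _ _).trans (by linarith [hB i, hB (i - j)])
  have hsubtype : ∀ α, ∑' j : {j : ℤ // j ≠ 0}, (u i - u (i - j)) * wT α h j
      = ∑' j : ℤ, (u i - u (i - j)) * wT α h j := fun α =>
    tsum_subtype_eq_of_support_subset (f := fun j : ℤ => (u i - u (i - j)) * wT α h j)
      (s := {j | j ≠ 0}) fun j hj => by
      rintro rfl
      simp at hj
  have hlimit : ∑' j : ℤ, (u i - u (i - j)) * (if j.natAbs = 1 then h ^ (-(2 : ℝ)) else 0)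
      = -(u (i + 1) - 2 * u i + u (i - 1)) / h ^ 2 := by
    rw [tsum_eq_sum (s := {1, -1}) fun j hj => by simp at hj; simp [show j.natAbs ≠ 1 by omega],
      Finset.sum_pair (by norm_num), rpow_neg hh.le, rpow_two]
    simp only [Int.natAbs_one, Int.natAbs_neg, if_true, sub_neg_eq_add]
    ring
  simp_rw [hsubtype, ← hlimit]
  refine tendsto_tsum_of_dominated_convergence
    ((summable_abs_int_rpow (b := 3 / 2) (by norm_num)).mul_left (2 * B * K))
    (fun j => (tendsto_wT hh j).const_mul _) ?_
  filter_upwards [hK] with α hα j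
  rw [norm_mul, norm_eq_abs, mul_assoc]
  exact mul_le_mul (hdiff j) (hα j) (abs_nonneg _) ((abs_nonneg _).trans (hdiff 0))

/-- As `α → 2⁻`, the weight `w_j^T` tends to `h^{−2}` for `|j| = 1` and to `0` for `|j| ≥ 2`;
consequently the discrete operator `Σ_{j≠0}(u_i − u_{i−j}) w_j^T` tends to the standard
three-point centered difference `−(u_{i+1} − 2u_i + u_{i−1})/h²`. -/
theorem wT_limit_alpha_two (h : ℝ) (hh : 0 < h) :
    (∀ j : ℤ, j.natAbs = 1 →
      Tendsto (fun α : ℝ => wT α h j) (nhdsWithin 2 (Set.Iio 2)) (nhds (h ^ (-(2:ℝ))))) ∧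
    (∀ j : ℤ, 2 ≤ j.natAbs →
      Tendsto (fun α : ℝ => wT α h j) (nhdsWithin 2 (Set.Iio 2)) (nhds 0)) ∧
    (∀ u : ℤ → ℝ, (∃ B : ℝ, ∀ i : ℤ, |u i| ≤ B) → ∀ i : ℤ,
      Tendsto (fun α : ℝ => ∑' j : {j : ℤ // j ≠ 0}, (u i - u (i - (j : ℤ))) * wT α h (j : ℤ))
        (nhdsWithin 2 (Set.Iio 2)) (nhds (-(u (i + 1) - 2 * u i + u (i - 1)) / h ^ 2))) :=
  ⟨fun _ => tendsto_wT_of_natAbs_eq_one hh, fun _ => tendsto_wT_of_two_le_natAbs hh,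
    fun _ hu => tendsto_tsum_wT hh hu⟩
end

section
/- Let h > 0 and define the grid function v_i = 4 − (ih)² if |ih| < 1 and v_i = 0 otherwise, for i ∈ ℤ. Then for every i ∈ ℤ with |ih| < 1 and every integer j ≥ 1, the negative second difference satisfies 2v_i − v_{i+j} − v_{i−j} ≥ min(2, 2(jh)²). -/
/-- For the grid function `v_i = 4 − (ih)²` if `|ih| < 1`, `v_i = 0` otherwise, the negative
centered second difference satisfies `2v_i − v_{i+j} − v_{i−j} ≥ min(2, 2(jh)²)` for every
grid index `i` with `|ih| < 1` and every integer `j ≥ 1`. -/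
theorem second_difference_barrier (h : ℝ) (hh : 0 < h) (v : ℤ → ℝ)
    (hv : ∀ i : ℤ, v i = if |(i : ℝ) * h| < 1 then 4 - ((i : ℝ) * h) ^ 2 else 0) :
    ∀ i : ℤ, |(i : ℝ) * h| < 1 → ∀ j : ℤ, 1 ≤ j →
      min 2 (2 * ((j : ℝ) * h) ^ 2) ≤ 2 * v i - v (i + j) - v (i - j) := by
  intro i hi j hj
  have hip : ((i + j : ℤ) : ℝ) * h = (i : ℝ) * h + (j : ℝ) * h := by push_cast; ring
  have him : ((i - j : ℤ) : ℝ) * h = (i : ℝ) * h - (j : ℝ) * h := by push_cast; ring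
  rw [hv i, hv (i + j), hv (i - j), hip, him, if_pos hi]
  set a := (i : ℝ) * h with ha
  set b := (j : ℝ) * h with hb
  have ha2 : a ^ 2 < 1 := by
    have h1 := abs_lt.mp hi
    nlinarith [h1.1, h1.2]
  split_ifs with h1 h2 h2
  · calc min 2 (2 * b ^ 2) ≤ 2 * b ^ 2 := min_le_right _ _
      _ ≤ _ := by nlinarith
  · calc min 2 (2 * b ^ 2) ≤ 2 := min_le_left _ _
      _ ≤ _ := by
        have h2' : 1 ≤ |a - b| := le_of_not_gt h2
        nlinarith [sq_abs (a - b), sq_nonneg (a - b)]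
  · calc min 2 (2 * b ^ 2) ≤ 2 := min_le_left _ _
      _ ≤ _ := by
        have h1' : 1 ≤ |a + b| := le_of_not_gt h1
        nlinarith [sq_abs (a + b), sq_nonneg (a + b)]
  · calc min 2 (2 * b ^ 2) ≤ 2 := min_le_left _ _
      _ ≤ _ := by nlinarith
end

section
/- Let h > 0, let D_h = {i ∈ ℤ : |ih| < 1}, and let w : ℤ → ℝ satisfy w_j > 0 for all j ≠ 0, w_{−j} = w_j, and Σ_{j≠0} w_j < ∞. Let u : ℤ → ℝ be bounded and define Lu_i = Σ_{j∈ℤ, j≠0} (u_i − u_{i−j}) w_j. If Lu_i ≤ 0 for all i ∈ D_h, then max_{i ∈ D_h} u_i ≤ sup_{i ∉ D_h} u_i. Similarly, if Lu_i ≥ 0 for all i ∈ D_h, then min_{i ∈ D_h} u_i ≥ inf_{i ∉ D_h} u_i. -/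
/-- The discrete operator `L u_i = Σ_{j∈ℤ, j≠0} (u_i − u_{i−j}) w_j`. -/
noncomputable def discL (w : ℤ → ℝ) (u : ℤ → ℝ) (i : ℤ) : ℝ :=
  ∑' j : {j : ℤ // j ≠ 0}, (u i - u (i - (j : ℤ))) * w (j : ℤ)

open Classical in
lemma aux_max (h : ℝ) (hh : 0 < h) (w : ℤ → ℝ)
    (hwpos : ∀ j : ℤ, j ≠ 0 → 0 < w j)
    (hwsum : Summable (fun j : {j : ℤ // j ≠ 0} => w (j : ℤ)))
    (u : ℤ → ℝ) (hub : ∃ B : ℝ, ∀ i : ℤ, |u i| ≤ B)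
    (hL : ∀ i : ℤ, |(i : ℝ) * h| < 1 → discL w u i ≤ 0) :
    ∀ i : ℤ, |(i : ℝ) * h| < 1 →
      u i ≤ ⨆ i' : {i' : ℤ // ¬ |(i' : ℝ) * h| < 1}, u (i' : ℤ) := by
  obtain ⟨B, hB⟩ := hub
  set N : ℤ := ⌈(1:ℝ)/h⌉ with hN
  have hNc : (1:ℝ)/h ≤ (N:ℝ) := Int.le_ceil _
  have hNout : ¬ |(N : ℝ) * h| < 1 := by
    have h1 : (1:ℝ) ≤ (N:ℝ) * h := by
      have := mul_le_mul_of_nonneg_right hNc hh.le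
      rwa [div_mul_cancel₀ _ hh.ne'] at this
    rw [not_lt, abs_of_nonneg (by linarith)]
    exact h1
  -- the subtype is nonempty and u is bounded above on it
  have hne : Nonempty {i' : ℤ // ¬ |(i' : ℝ) * h| < 1} := ⟨⟨N, hNout⟩⟩
  have hbdd : BddAbove (Set.range fun i' : {i' : ℤ // ¬ |(i' : ℝ) * h| < 1} => u (i' : ℤ)) := by
    refine ⟨B, ?_⟩
    rintro x ⟨i', rfl⟩
    exact (abs_le.mp (hB i')).2
  set S : ℝ := ⨆ i' : {i' : ℤ // ¬ |(i' : ℝ) * h| < 1}, u (i' : ℤ) with hS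
  -- D_h is contained in a finite interval
  have hsub : ∀ i : ℤ, |(i : ℝ) * h| < 1 → i ∈ Finset.Icc (-N) N := by
    intro i hi
    rw [abs_mul, abs_of_pos hh] at hi
    have : |(i:ℝ)| < 1/h := (lt_div_iff₀ hh).mpr hi
    have : |(i:ℝ)| < (N:ℝ) := lt_of_lt_of_le this hNc
    rw [← Int.cast_abs, Int.cast_lt, abs_lt] at this
    rw [Finset.mem_Icc]
    omega
  set F : Finset ℤ := (Finset.Icc (-N) N).filter (fun i => |(i : ℝ) * h| < 1) with hF
  have hN0 : 0 ≤ N := (Int.ceil_pos.mpr (div_pos one_pos hh)).le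
  have hFne : F.Nonempty := ⟨0, Finset.mem_filter.mpr
    ⟨Finset.mem_Icc.mpr ⟨by omega, hN0⟩, by norm_num⟩⟩
  obtain ⟨i0, hi0F, hi0max⟩ := F.exists_max_image u hFne
  have hi0D : |(i0 : ℝ) * h| < 1 := (Finset.mem_filter.mp hi0F).2
  -- summability of the series for discL at any i
  have hsum : ∀ i : ℤ, Summable (fun j : {j : ℤ // j ≠ 0} => (u i - u (i - (j : ℤ))) * w (j : ℤ)) := by
    intro i
    apply Summable.of_abs
    apply Summable.of_nonneg_of_le (fun j => abs_nonneg _)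
      (fun j => ?_) (hwsum.mul_left (2*B))
    rw [abs_mul, abs_of_pos (hwpos _ j.2)]
    have h1 : |u i - u (i - (j:ℤ))| ≤ 2*B := by
      have := hB i; have := hB (i - (j:ℤ))
      rw [abs_le] at *
      constructor <;> linarith [this.1, this.2]
    exact mul_le_mul_of_nonneg_right h1 (hwpos _ j.2).le
  -- show u i0 ≤ S
  have hkey : u i0 ≤ S := by
    by_contra hcon
    push_neg at hcon
    -- all u values are ≤ u i0
    have hall : ∀ k : ℤ, u k ≤ u i0 := by
      intro k
      by_cases hk : |(k : ℝ) * h| < 1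
      · exact hi0max k (Finset.mem_filter.mpr ⟨hsub k hk, hk⟩)
      · calc u k ≤ S := le_ciSup hbdd ⟨k, hk⟩
          _ ≤ u i0 := hcon.le
    -- pick j0 with i0 - j0 outside D_h
    have hj0ne : i0 - N ≠ 0 := by
      intro hc
      have : i0 = N := by omega
      exact hNout (this ▸ hi0D)
    set j0 : {j : ℤ // j ≠ 0} := ⟨i0 - N, hj0ne⟩ with hj0
    have hpos : 0 < (u i0 - u (i0 - (j0 : ℤ))) * w (j0 : ℤ) := by
      have hsimp : i0 - (j0 : ℤ) = N := by simp [hj0]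
      rw [hsimp]
      apply mul_pos _ (hwpos _ hj0ne)
      have : u N ≤ S := le_ciSup hbdd ⟨N, hNout⟩
      linarith
    have hterm : (u i0 - u (i0 - (j0 : ℤ))) * w (j0 : ℤ) ≤ discL w u i0 := by
      apply Summable.le_tsum (hsum i0) j0
      intro j _
      apply mul_nonneg _ (hwpos _ j.2).le
      linarith [hall (i0 - (j:ℤ))]
    have := hL i0 hi0D
    linarith
  intro i hi
  calc u i ≤ u i0 := hi0max i (Finset.mem_filter.mpr ⟨hsub i hi, hi⟩)
    _ ≤ S := hkey



/-- Discrete maximum principle on `D_h = {i : |ih| < 1}`: if `L u ≤ 0` on `D_h` then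
`u` on `D_h` is bounded by `sup_{i ∉ D_h} u_i`; if `L u ≥ 0` on `D_h` then `u` on `D_h`
is bounded below by `inf_{i ∉ D_h} u_i`. -/

theorem discrete_maximum_principle (h : ℝ) (hh : 0 < h) (w : ℤ → ℝ)
    (hwpos : ∀ j : ℤ, j ≠ 0 → 0 < w j) (hwsymm : ∀ j : ℤ, w (-j) = w j)
    (hwsum : Summable (fun j : {j : ℤ // j ≠ 0} => w (j : ℤ)))
    (u : ℤ → ℝ) (hub : ∃ B : ℝ, ∀ i : ℤ, |u i| ≤ B) :
    ((∀ i : ℤ, |(i : ℝ) * h| < 1 → discL w u i ≤ 0) →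
      ∀ i : ℤ, |(i : ℝ) * h| < 1 →
        u i ≤ ⨆ i' : {i' : ℤ // ¬ |(i' : ℝ) * h| < 1}, u (i' : ℤ)) ∧
    ((∀ i : ℤ, |(i : ℝ) * h| < 1 → 0 ≤ discL w u i) →
      ∀ i : ℤ, |(i : ℝ) * h| < 1 →
        (⨅ i' : {i' : ℤ // ¬ |(i' : ℝ) * h| < 1}, u (i' : ℤ)) ≤ u i) := by
  obtain ⟨B, hB⟩ := hub
  constructor
  · exact aux_max h hh w hwpos hwsum u ⟨B, hB⟩
  · intro hL i hi
    have hneg : ∀ k : ℤ, |(-u) k| ≤ B := fun k => by simpa using hB k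
    have hLneg : ∀ k : ℤ, |(k : ℝ) * h| < 1 → discL w (-u) k ≤ 0 := by
      intro k hk
      have heq : discL w (-u) k = -discL w u k := by
        simp only [discL]
        rw [← tsum_neg]
        congr 1
        funext j
        simp only [Pi.neg_apply]
        ring
      rw [heq]
      linarith [hL k hk]
    have := aux_max h hh w hwpos hwsum (-u) ⟨B, hneg⟩ hLneg i hi
    have hNout : ¬ |((⌈(1:ℝ)/h⌉ : ℤ) : ℝ) * h| < 1 := by
      have hNc : (1:ℝ)/h ≤ ((⌈(1:ℝ)/h⌉ : ℤ) : ℝ) := Int.le_ceil _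
      have h1 : (1:ℝ) ≤ ((⌈(1:ℝ)/h⌉ : ℤ) : ℝ) * h := by
        have := mul_le_mul_of_nonneg_right hNc hh.le
        rwa [div_mul_cancel₀ _ hh.ne'] at this
      rw [not_lt, abs_of_nonneg (by linarith)]
      exact h1
    have hne : Nonempty {i' : ℤ // ¬ |(i' : ℝ) * h| < 1} := ⟨⟨_, hNout⟩⟩
    have hbddb : BddBelow (Set.range fun i' : {i' : ℤ // ¬ |(i' : ℝ) * h| < 1} => u (i' : ℤ)) := by
      refine ⟨-B, ?_⟩
      rintro x ⟨i', rfl⟩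
      exact (abs_le.mp (hB i')).1
    have hsup : (⨆ i' : {i' : ℤ // ¬ |(i' : ℝ) * h| < 1}, (-u) (i' : ℤ)) ≤
        -(⨅ i' : {i' : ℤ // ¬ |(i' : ℝ) * h| < 1}, u (i' : ℤ)) := by
      apply ciSup_le
      intro i'
      simp only [Pi.neg_apply, neg_le_neg_iff]
      exact ciInf_le hbddb i'
    have : (-u) i ≤ -(⨅ i' : {i' : ℤ // ¬ |(i' : ℝ) * h| < 1}, u (i' : ℤ)) := le_trans this hsup
    simpa using neg_le_neg this
end

section
/- Let h > 0, let D_h = {i ∈ ℤ : |ih| < 1}, and let w : ℤ → ℝ satisfy w_j > 0 for all j ≠ 0, w_{−j} = w_j, and Σ_{j≠0} w_j < ∞. Define Lu_i = Σ_{j∈ℤ, j≠0} (u_i − u_{i−j}) w_j for bounded grid functions u : ℤ → ℝ. Suppose there exists a grid function v : ℤ → ℝ with v_i = 0 for all i ∉ D_h, 0 ≤ v_i ≤ 4 for all i ∈ ℤ, and Lv_i ≥ 1 for all i ∈ D_h. Then every bounded grid function u : ℤ → ℝ satisfies max_{i ∈ D_h} |u_i| ≤ sup_{i ∉ D_h}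 |u_i| + 4 · max_{i ∈ D_h} |Lu_i|. -/
/-!
A discrete comparison principle. Let `u ≤ M` off `D` and `Lu ≤ K` on `D`. For `c > K ≥ 0`,
the function `φ = M + c v - u` is nonnegative off `D`, so if it is negative somewhere it
attains its global minimum at some `a ∈ D` (a finite set). There `Lφ(a) ≤ 0` because the
weights are nonnegative, while `Lφ(a) = c Lv(a) - Lu(a) ≥ c - K > 0`. Hence `u ≤ M + c v`
on `D`; letting `c ↓ K` and applying this to `±u` gives `|u| ≤ M + K v ≤ M + 4K`.
-/

open Filter Topology

lemma finite_setOf_abs_intCast_mul_lt_one {h : ℝ} (hh : h ≠ 0) :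
    {i : ℤ | |(i : ℝ) * h| < 1}.Finite := by
  refine (eventually_cofinite.mp <| Int.tendsto_coe_cofinite.eventually
    (isCompact_closedBall (0 : ℝ) |h|⁻¹).compl_mem_cocompact).subset
    fun i (hi : |(i : ℝ) * h| < 1) => ?_
  rw [abs_mul, ← lt_div_iff₀ (abs_pos.mpr hh), one_div] at hi
  simpa using hi.le

section Operator

variable {w : ℤ → ℝ}

lemma summable_discL_summand (hw : Summable fun j : {j : ℤ // j ≠ 0} => w j)
    {u : ℤ → ℝ} {B : ℝ} (hu : ∀ i, |u i| ≤ B) (i : ℤ) :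
    Summable fun j : {j : ℤ // j ≠ 0} => (u i - u (i - j)) * w j := by
  refine (hw.abs.mul_left (2 * B)).of_norm_bounded fun j => ?_
  rw [Real.norm_eq_abs, abs_mul]
  gcongr
  linarith [abs_sub (u i) (u (i - j)), hu i, hu (i - j)]

lemma discL_neg (u : ℤ → ℝ) (i : ℤ) : discL w (-u) i = -discL w u i := by
  rw [discL, discL, ← tsum_neg]
  congr with j
  simp only [Pi.neg_apply]
  ring

lemma discL_const_add_mul_sub (hw : Summable fun j : {j : ℤ // j ≠ 0} => w j)
    {u v : ℤ → ℝ} {B C : ℝ} (hu : ∀ i, |u i| ≤ B) (hv : ∀ i, |v i| ≤ C) (M c : ℝ) (i : ℤ) :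
    discL w (fun j => M + c * v j - u j) i = c * discL w v i - discL w u i := by
  have hcv := (summable_discL_summand hw hv i).mul_left c
  rw [discL, discL, discL, ← tsum_mul_left,
    ← hcv.tsum_sub (summable_discL_summand hw hu i)]
  congr with j
  ring

lemma discL_nonpos_of_forall_le (hw : ∀ j, j ≠ 0 → 0 ≤ w j) {φ : ℤ → ℝ} {a : ℤ}
    (ha : ∀ j, φ a ≤ φ j) : discL w φ a ≤ 0 :=
  tsum_nonpos fun j => mul_nonpos_of_nonpos_of_nonneg (sub_nonpos.mpr (ha _)) (hw j j.2)

end Operator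

section Comparison

variable {w : ℤ → ℝ} {D : Set ℤ} {u v : ℤ → ℝ} {B C M K : ℝ}

lemma le_add_mul_of_discL_le_of_lt (hw : ∀ j, j ≠ 0 → 0 ≤ w j)
    (hws : Summable fun j : {j : ℤ // j ≠ 0} => w j) (hD : D.Finite)
    (hv0 : ∀ i ∉ D, v i = 0) (hv : ∀ i, |v i| ≤ C) (hvL : ∀ i ∈ D, 1 ≤ discL w v i)
    (hu : ∀ i, |u i| ≤ B) (hM : ∀ i ∉ D, u i ≤ M) (hK : ∀ i ∈ D, discL w u i ≤ K)
    {c : ℝ} (hc : 0 ≤ c) (hKc : K < c) : ∀ i ∈ D, u i ≤ M + c * v i := by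
  intro i hi
  by_contra! hneg
  set φ := fun j => M + c * v j - u j
  obtain ⟨a, haD, hamin⟩ := Set.exists_min_image D φ hD ⟨i, hi⟩
  have hφa : φ a < 0 := (hamin i hi).trans_lt (by simp only [φ]; linarith)
  have hglobal : ∀ j, φ a ≤ φ j := fun j => by
    by_cases hj : j ∈ D
    · exact hamin j hj
    · simp only [φ, hv0 j hj]
      linarith [hM j hj]
  have hφL : c * discL w v a - discL w u a ≤ 0 :=
    discL_const_add_mul_sub hws hu hv M c a ▸ discL_nonpos_of_forall_le hw hglobal
  nlinarith [hvL a haD, hK a haD]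

lemma le_add_mul_of_discL_le (hw : ∀ j, j ≠ 0 → 0 ≤ w j)
    (hws : Summable fun j : {j : ℤ // j ≠ 0} => w j) (hD : D.Finite)
    (hv0 : ∀ i ∉ D, v i = 0) (hv : ∀ i, |v i| ≤ C) (hvL : ∀ i ∈ D, 1 ≤ discL w v i)
    (hu : ∀ i, |u i| ≤ B) (hM : ∀ i ∉ D, u i ≤ M) (hK : ∀ i ∈ D, discL w u i ≤ K)
    (hK0 : 0 ≤ K) : ∀ i ∈ D, u i ≤ M + K * v i := by
  intro i hi
  have hlim : Tendsto (fun c => M + c * v i) (𝓝[>] K) (𝓝 (M + K * v i)) :=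
    (by fun_prop : Continuous fun c => M + c * v i).continuousWithinAt
  refine ge_of_tendsto hlim ?_
  filter_upwards [self_mem_nhdsWithin] with c (hKc : K < c)
  exact le_add_mul_of_discL_le_of_lt hw hws hD hv0 hv hvL hu hM hK (hK0.trans hKc.le) hKc i hi

lemma abs_le_add_mul_of_abs_discL_le (hw : ∀ j, j ≠ 0 → 0 ≤ w j)
    (hws : Summable fun j : {j : ℤ // j ≠ 0} => w j) (hD : D.Finite)
    (hv0 : ∀ i ∉ D, v i = 0) (hv : ∀ i, |v i| ≤ C) (hvL : ∀ i ∈ D, 1 ≤ discL w v i)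
    (hu : ∀ i, |u i| ≤ B) (hM : ∀ i ∉ D, |u i| ≤ M)
    (hK : ∀ i ∈ D, |discL w u i| ≤ K) : ∀ i ∈ D, |u i| ≤ M + K * v i := by
  intro i hi
  have hK0 : 0 ≤ K := (abs_nonneg _).trans (hK i hi)
  refine abs_le'.mpr ⟨?_, ?_⟩
  · exact le_add_mul_of_discL_le hw hws hD hv0 hv hvL hu
      (fun j hj => (le_abs_self _).trans (hM j hj))
      (fun j hj => (le_abs_self _).trans (hK j hj)) hK0 i hi
  · refine le_add_mul_of_discL_le hw hws hD hv0 hv hvL (u := -u)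
      (fun j => (abs_neg (u j)).trans_le (hu j))
      (fun j hj => (neg_le_abs _).trans (hM j hj))
      (fun j hj => ?_) hK0 i hi
    rw [discL_neg]
    exact (neg_le_abs _).trans (hK j hj)

end Comparison

theorem discrete_stability_general (h : ℝ) (hh : 0 < h) (w : ℤ → ℝ)
    (hwpos : ∀ j : ℤ, j ≠ 0 → 0 < w j)
    (hwsum : Summable (fun j : {j : ℤ // j ≠ 0} => w (j : ℤ)))
    (v : ℤ → ℝ)
    (hv0 : ∀ i : ℤ, ¬ |(i : ℝ) * h| < 1 → v i = 0)
    (hvb : ∀ i : ℤ, 0 ≤ v i ∧ v i ≤ 4)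
    (hvL : ∀ i : ℤ, |(i : ℝ) * h| < 1 → 1 ≤ discL w v i)
    (u : ℤ → ℝ) (hub : ∃ B : ℝ, ∀ i : ℤ, |u i| ≤ B) :
    ∀ i : ℤ, |(i : ℝ) * h| < 1 →
      |u i| ≤ (⨆ i' : {i' : ℤ // ¬ |(i' : ℝ) * h| < 1}, |u (i' : ℤ)|)
        + 4 * ⨆ i' : {i' : ℤ // |(i' : ℝ) * h| < 1}, |discL w u (i' : ℤ)| := by
  obtain ⟨B, hB⟩ := hub
  have hD := finite_setOf_abs_intCast_mul_lt_one hh.ne'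
  have : Finite {i' : ℤ // |(i' : ℝ) * h| < 1} := hD.to_subtype
  set M := ⨆ i' : {i' : ℤ // ¬ |(i' : ℝ) * h| < 1}, |u (i' : ℤ)|
  set K := ⨆ i' : {i' : ℤ // |(i' : ℝ) * h| < 1}, |discL w u (i' : ℤ)|
  have hM : ∀ i : ℤ, ¬ |(i : ℝ) * h| < 1 → |u i| ≤ M := fun i hi =>
    le_ciSup (f := fun i' : {i' : ℤ // ¬ |(i' : ℝ) * h| < 1} => |u i'|)
      ⟨B, by rintro _ ⟨j, rfl⟩; exact hB j⟩ ⟨i, hi⟩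
  have hK : ∀ i : ℤ, |(i : ℝ) * h| < 1 → |discL w u i| ≤ K := fun i hi =>
    le_ciSup (f := fun i' : {i' : ℤ // |(i' : ℝ) * h| < 1} => |discL w u i'|)
      (Set.finite_range _).bddAbove ⟨i, hi⟩
  have hv : ∀ i, |v i| ≤ 4 := fun i => abs_le.mpr ⟨by linarith [(hvb i).1], (hvb i).2⟩
  intro i hi
  have hK0 : 0 ≤ K := (abs_nonneg _).trans (hK i hi)
  have hui := abs_le_add_mul_of_abs_discL_le (fun j hj => (hwpos j hj).le) hwsum hD hv0 hv hvL
    hB hM hK i hi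
  linarith [mul_le_mul_of_nonneg_left (hvb i).2 hK0]

/-- Stability estimate: if a discrete super-solution `v` exists (vanishing off
`D_h = {i : |ih| < 1}`, bounded by `4`, with `L v ≥ 1` on `D_h`), then every bounded grid
function `u` satisfies `max_{D_h} |u| ≤ sup_{∉ D_h} |u| + 4 max_{D_h} |L u|`. -/
theorem discrete_stability (h : ℝ) (hh : 0 < h) (w : ℤ → ℝ)
    (hwpos : ∀ j : ℤ, j ≠ 0 → 0 < w j) (hwsymm : ∀ j : ℤ, w (-j) = w j)
    (hwsum : Summable (fun j : {j : ℤ // j ≠ 0} => w (j : ℤ)))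
    (v : ℤ → ℝ)
    (hv0 : ∀ i : ℤ, ¬ |(i : ℝ) * h| < 1 → v i = 0)
    (hvb : ∀ i : ℤ, 0 ≤ v i ∧ v i ≤ 4)
    (hvL : ∀ i : ℤ, |(i : ℝ) * h| < 1 → 1 ≤ discL w v i)
    (u : ℤ → ℝ) (hub : ∃ B : ℝ, ∀ i : ℤ, |u i| ≤ B) :
    ∀ i : ℤ, |(i : ℝ) * h| < 1 →
      |u i| ≤ (⨆ i' : {i' : ℤ // ¬ |(i' : ℝ) * h| < 1}, |u (i' : ℤ)|)
        + 4 * ⨆ i' : {i' : ℤ // |(i' : ℝ) * h| < 1}, |discL w u (i' : ℤ)| :=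
  discrete_stability_general h hh w hwpos hwsum v hv0 hvb hvL u hub
end

section
/- Let h > 0, let D_h = {i ∈ ℤ : |ih| < 1}, and let w : ℤ → ℝ satisfy w_j > 0 for all j ≠ 0, w_{−j} = w_j, and Σ_{j≠0} w_j < ∞; define Lφ_i = Σ_{j∈ℤ, j≠0} (φ_i − φ_{i−j}) w_j for bounded grid functions φ : ℤ → ℝ. Suppose there exists a grid function v : ℤ → ℝ with v_i = 0 for i ∉ D_h, 0 ≤ v_i ≤ 4 for all i, and Lv_i ≥ 1 for all i ∈ D_h. Let u : ℝ → ℝ be bounded, let f : D_h → ℝ, and let u^h : ℤ → ℝ be a bounded grid function satisfying the discrete Dirichlet problem: L u^h_i = f_i for all i ∈ D_h and u^h_i = u(ih) for all i ∉ D_h. Define the truncation error r_i = L(u(·h))_i − f_i for i ∈ D_h, where u(·h) denotes the grid function i ↦ u(ih). Then the solution error e_i = u(ih) − u^h_i satisfies max_{i ∈ D_h} |e_i| ≤ 4 · max_{i ∈ D_h} |r_i|. -/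
lemma discL_summable (w : ℤ → ℝ) (hwpos : ∀ j : ℤ, j ≠ 0 → 0 < w j)
    (hwsum : Summable (fun j : {j : ℤ // j ≠ 0} => w (j : ℤ)))
    (φ : ℤ → ℝ) (B : ℝ) (hB : ∀ i : ℤ, |φ i| ≤ B) (i : ℤ) :
    Summable (fun j : {j : ℤ // j ≠ 0} => (φ i - φ (i - (j : ℤ))) * w (j : ℤ)) := by
  apply Summable.of_abs
  apply Summable.of_nonneg_of_le (fun j => abs_nonneg _) _ (hwsum.mul_left (2 * B))
  intro j
  rw [abs_mul, abs_of_pos (hwpos _ j.2)]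
  apply mul_le_mul_of_nonneg_right _ (hwpos _ j.2).le
  calc |φ i - φ (i - (j : ℤ))| ≤ |φ i| + |φ (i - (j : ℤ))| := abs_sub _ _
    _ ≤ 2 * B := by have := hB i; have := hB (i - (j : ℤ)); linarith

lemma discL_sub (w : ℤ → ℝ) (g ψ : ℤ → ℝ) (i : ℤ)
    (hg : Summable (fun j : {j : ℤ // j ≠ 0} => (g i - g (i - (j : ℤ))) * w (j : ℤ)))
    (hψ : Summable (fun j : {j : ℤ // j ≠ 0} => (ψ i - ψ (i - (j : ℤ))) * w (j : ℤ))) :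
    discL w (fun k => g k - ψ k) i = discL w g i - discL w ψ i := by
  unfold discL
  rw [← Summable.tsum_sub hg hψ]
  exact tsum_congr fun j => by ring

lemma discL_combo (w : ℤ → ℝ) (a : ℝ) (v φ : ℤ → ℝ) (i : ℤ)
    (hv : Summable (fun j : {j : ℤ // j ≠ 0} => (v i - v (i - (j : ℤ))) * w (j : ℤ)))
    (hφ : Summable (fun j : {j : ℤ // j ≠ 0} => (φ i - φ (i - (j : ℤ))) * w (j : ℤ))) :
    discL w (fun k => a * v k + φ k) i = a * discL w v i + discL w φ i := by
  unfold discL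
  rw [← tsum_mul_left, ← Summable.tsum_add (hv.mul_left a) hφ]
  exact tsum_congr fun j => by ring

lemma Dh_finite (h : ℝ) (hh : 0 < h) : {i : ℤ | |(i : ℝ) * h| < 1}.Finite := by
  apply Set.Finite.subset (Set.finite_Icc (-⌈1/h⌉) ⌈1/h⌉)
  intro i hi
  simp only [Set.mem_setOf_eq] at hi
  have h1 : |(i : ℝ)| < 1 / h := by
    rw [abs_mul, abs_of_pos hh] at hi
    rw [lt_div_iff₀ hh]; exact hi
  have h2 : |(i : ℝ)| ≤ ((⌈1/h⌉ : ℤ) : ℝ) := h1.le.trans (Int.le_ceil _)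
  rw [← Int.cast_abs, Int.cast_le] at h2
  simp only [Set.mem_Icc]
  exact ⟨neg_le_of_abs_le h2, le_of_abs_le h2⟩

lemma maxprin (h : ℝ) (hh : 0 < h) (w : ℤ → ℝ)
    (hwpos : ∀ j : ℤ, j ≠ 0 → 0 < w j)
    (hwsum : Summable (fun j : {j : ℤ // j ≠ 0} => w (j : ℤ)))
    (φ : ℤ → ℝ) (B : ℝ) (hB : ∀ i : ℤ, |φ i| ≤ B)
    (hzero : ∀ i : ℤ, ¬ |(i : ℝ) * h| < 1 → φ i = 0)
    (hL : ∀ i : ℤ, |(i : ℝ) * h| < 1 → 0 ≤ discL w φ i) :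
    ∀ i : ℤ, 0 ≤ φ i := by
  have hfin := Dh_finite h hh
  have hne : hfin.toFinset.Nonempty := ⟨0, by simp⟩
  obtain ⟨i0, hi0s, hmin⟩ := hfin.toFinset.exists_min_image φ hne
  have hi0D : |(i0 : ℝ) * h| < 1 := by simpa using hi0s
  by_cases hneg : 0 ≤ φ i0
  · intro i
    by_cases hiD : |(i : ℝ) * h| < 1
    · exact hneg.trans (hmin i (by simpa using hiD))
    · rw [hzero i hiD]
  · push_neg at hneg
    exfalso
    have hglob : ∀ k : ℤ, φ i0 ≤ φ k := by
      intro k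
      by_cases hk : |(k : ℝ) * h| < 1
      · exact hmin k (by simpa using hk)
      · rw [hzero k hk]; exact hneg.le
    have hsum : Summable (fun j : {j : ℤ // j ≠ 0} => (φ i0 - φ (i0 - (j : ℤ))) * w (j : ℤ)) :=
      discL_summable w hwpos hwsum φ B hB i0
    have hterm_nonpos : ∀ j : {j : ℤ // j ≠ 0}, (φ i0 - φ (i0 - (j : ℤ))) * w (j : ℤ) ≤ 0 :=
      fun j => mul_nonpos_of_nonpos_of_nonneg (sub_nonpos.2 (hglob _)) (hwpos _ j.2).le
    set N : ℤ := max (i0 + 1) ⌈(1:ℝ)/h⌉ with hN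
    have hNi0 : i0 < N := lt_of_lt_of_le (lt_add_one i0) (le_max_left _ _)
    have hND : ¬ |(N : ℝ) * h| < 1 := by
      push_neg
      have h1 : (1:ℝ)/h ≤ (N : ℝ) :=
        le_trans (Int.le_ceil _) (by exact_mod_cast le_max_right (i0 + 1) ⌈(1:ℝ)/h⌉)
      have h2 : 1 ≤ (N : ℝ) * h := by rw [div_le_iff₀ hh] at h1; linarith
      exact h2.trans (le_abs_self _)
    have hj0 : i0 - N ≠ 0 := sub_ne_zero.2 (ne_of_lt hNi0)
    have hterm : (φ i0 - φ (i0 - ((⟨i0 - N, hj0⟩ : {j : ℤ // j ≠ 0}) : ℤ)))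
        * w ((⟨i0 - N, hj0⟩ : {j : ℤ // j ≠ 0}) : ℤ) < 0 := by
      have heq : i0 - (i0 - N) = N := by ring
      simp only [heq]
      rw [hzero N hND, sub_zero]
      exact mul_neg_of_neg_of_pos hneg (hwpos _ hj0)
    have hlt : discL w φ i0 < 0 := by
      have := Summable.tsum_lt_tsum (i := (⟨i0 - N, hj0⟩ : {j : ℤ // j ≠ 0}))
        hterm_nonpos hterm hsum summable_zero
      simpa [discL, tsum_zero] using this
    linarith [hL i0 hi0D]

/-- Convergence theorem for the discretized extended Dirichlet problem: if `u^h` solves the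
discrete Dirichlet problem `L u^h = f` on `D_h = {i : |ih| < 1}`, `u^h_i = u(ih)` off `D_h`,
and a discrete super-solution `v` exists, then the solution error `e_i = u(ih) − u^h_i`
satisfies `max_{D_h} |e| ≤ 4 max_{D_h} |r|`, where `r_i = L(u(·h))_i − f_i` is the local
truncation error. -/
theorem discrete_dirichlet_convergence (h : ℝ) (hh : 0 < h) (w : ℤ → ℝ)
    (hwpos : ∀ j : ℤ, j ≠ 0 → 0 < w j) (hwsymm : ∀ j : ℤ, w (-j) = w j)
    (hwsum : Summable (fun j : {j : ℤ // j ≠ 0} => w (j : ℤ)))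
    (v : ℤ → ℝ)
    (hv0 : ∀ i : ℤ, ¬ |(i : ℝ) * h| < 1 → v i = 0)
    (hvb : ∀ i : ℤ, 0 ≤ v i ∧ v i ≤ 4)
    (hvL : ∀ i : ℤ, |(i : ℝ) * h| < 1 → 1 ≤ discL w v i)
    (u : ℝ → ℝ) (hub : ∃ B : ℝ, ∀ x : ℝ, |u x| ≤ B)
    (f : ℤ → ℝ) (uh : ℤ → ℝ) (huhb : ∃ B : ℝ, ∀ i : ℤ, |uh i| ≤ B)
    (huheq : ∀ i : ℤ, |(i : ℝ) * h| < 1 → discL w uh i = f i)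
    (huhbc : ∀ i : ℤ, ¬ |(i : ℝ) * h| < 1 → uh i = u ((i : ℝ) * h)) :
    ∀ i : ℤ, |(i : ℝ) * h| < 1 →
      |u ((i : ℝ) * h) - uh i|
        ≤ 4 * ⨆ i' : {i' : ℤ // |(i' : ℝ) * h| < 1},
            |discL w (fun k : ℤ => u ((k : ℝ) * h)) (i' : ℤ) - f (i' : ℤ)| := by
  obtain ⟨Bu, hBu⟩ := hub
  obtain ⟨Bh, hBh⟩ := huhb
  intro i hi
  have hfin := Dh_finite h hh
  have hDfin : Finite {i' : ℤ // |(i' : ℝ) * h| < 1} := hfin.to_subtype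
  have hDne : Nonempty {i' : ℤ // |(i' : ℝ) * h| < 1} := ⟨⟨0, by simp⟩⟩
  set U : ℤ → ℝ := fun k : ℤ => u ((k : ℝ) * h) with hU
  set R : ℝ := ⨆ i' : {i' : ℤ // |(i' : ℝ) * h| < 1}, |discL w U (i' : ℤ) - f (i' : ℤ)| with hRdef
  have hbdd : BddAbove (Set.range
      (fun i' : {i' : ℤ // |(i' : ℝ) * h| < 1} => |discL w U (i' : ℤ) - f (i' : ℤ)|)) :=
    (Set.finite_range _).bddAbove
  have hrle : ∀ k : ℤ, |(k : ℝ) * h| < 1 → |discL w U k - f k| ≤ R := fun k hk =>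
    le_ciSup hbdd (⟨k, hk⟩ : {i' : ℤ // |(i' : ℝ) * h| < 1})
  have hR0 : 0 ≤ R := (abs_nonneg _).trans (hrle i hi)
  -- boundedness facts
  have hUb : ∀ k : ℤ, |U k| ≤ Bu := fun k => hBu _
  have hvb' : ∀ k : ℤ, |v k| ≤ 4 := fun k =>
    abs_le.2 ⟨by linarith [(hvb k).1], (hvb k).2⟩
  -- summabilities
  have hsU : ∀ k : ℤ, Summable
      (fun j : {j : ℤ // j ≠ 0} => (U k - U (k - (j : ℤ))) * w (j : ℤ)) :=
    discL_summable w hwpos hwsum U Bu hUb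
  have hsuh : ∀ k : ℤ, Summable
      (fun j : {j : ℤ // j ≠ 0} => (uh k - uh (k - (j : ℤ))) * w (j : ℤ)) :=
    discL_summable w hwpos hwsum uh Bh hBh
  -- the error function
  have key : ∀ g : ℤ → ℝ, (∀ k : ℤ, |g k| ≤ Bu + Bh) →
      (∀ k : ℤ, ¬ |(k : ℝ) * h| < 1 → g k = 0) →
      (∀ k : ℤ, |(k : ℝ) * h| < 1 → -R ≤ discL w g k) →
      0 ≤ R * v i + g i := by
    intro g hgb hg0 hgL
    refine maxprin h hh w hwpos hwsum (fun k => R * v k + g k) (R * 4 + (Bu + Bh))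
      ?_ ?_ ?_ i
    · intro k
      calc |R * v k + g k| ≤ |R * v k| + |g k| := abs_add_le _ _
        _ ≤ R * 4 + (Bu + Bh) := by
          have h1 : |R * v k| ≤ R * 4 := by
            rw [abs_mul, abs_of_nonneg hR0]
            exact mul_le_mul_of_nonneg_left (hvb' k) hR0
          linarith [hgb k]
    · intro k hk
      show R * v k + g k = 0
      rw [hv0 k hk, hg0 k hk]; ring
    · intro k hk
      rw [discL_combo w R v g k
        (discL_summable w hwpos hwsum v 4 hvb' k)
        (discL_summable w hwpos hwsum g (Bu + Bh) hgb k)]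
      have h1 : R * 1 ≤ R * discL w v k := mul_le_mul_of_nonneg_left (hvL k hk) hR0
      linarith [hgL k hk]
  have heL : ∀ k : ℤ, |(k : ℝ) * h| < 1 →
      discL w (fun k' => U k' - uh k') k = discL w U k - f k := by
    intro k hk
    rw [discL_sub w U uh k (hsU k) (hsuh k), huheq k hk]
  have hse : ∀ k : ℤ, |(fun k' => U k' - uh k') k| ≤ Bu + Bh := by
    intro k
    calc |U k - uh k| ≤ |U k| + |uh k| := abs_sub _ _
      _ ≤ Bu + Bh := add_le_add (hUb k) (hBh k)
  have hse' : ∀ k : ℤ, |(fun k' => uh k' - U k') k| ≤ Bu + Bh := by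
    intro k
    rw [abs_sub_comm]
    exact hse k
  have he0 : ∀ k : ℤ, ¬ |(k : ℝ) * h| < 1 → U k - uh k = 0 := by
    intro k hk
    rw [huhbc k hk]; simp [hU]
  have h1 : 0 ≤ R * v i + (U i - uh i) := by
    apply key (fun k => U k - uh k) hse he0
    intro k hk
    rw [heL k hk]
    linarith [neg_abs_le (discL w U k - f k), hrle k hk]
  have h2 : 0 ≤ R * v i + (uh i - U i) := by
    apply key (fun k => uh k - U k) hse'
    · intro k hk
      have := he0 k hk; linarith
    · intro k hk
      have : discL w (fun k' => uh k' - U k') k = -(discL w U k - f k) := by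
        rw [discL_sub w uh U k (hsuh k) (hsU k), huheq k hk]; ring
      rw [this]
      have := hrle k hk
      have := le_abs_self (discL w U k - f k)
      linarith
  have hv4 : R * v i ≤ 4 * R := by
    have := (hvb i).2
    nlinarith
  rw [abs_le]
  constructor <;> [skip; skip] <;> simp only [hU] at h1 h2 ⊢ <;> linarith
end

section
/- For every α ∈ (0,2), the function y ↦ (1 − e^{−y²})·|y|^{−1−α} is integrable on ℝ and C₁,α · ∫_ℝ (1 − e^{−y²}) |y|^{−1−α} dy = 2^α · Γ((1+α)/2) / √π. That is, the fractional Laplacian of the Gaussian u(x) = e^{−x²}, evaluated at x = 0 via its singular integral representation (−Δ)^{α/2}u(0) = C₁,α ∫_ℝ (u(0) − u(y))|y|^{−1−α} dy, equals 2^α Γ((1+α)/2)/√π. -/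
/-!
The integrand is even, so the integral is twice the one over `(0, ∞)`. There, integrating by
parts against `v(y) = -y^{-α}/α` moves the derivative onto `1 - e^{-y²}` and leaves
`(2/α) ∫₀^∞ y^{1-α} e^{-y²} dy = Γ((2-α)/2)/α`. The bound `0 ≤ 1 - e^{-y²} ≤ min(1, y²)` gives
both the integrability and the vanishing of the boundary terms. The factor `Γ((2-α)/2)` then
cancels against the denominator of `C₁,α`.
-/

open MeasureTheory

open Real Set Filter Topology

lemma integrable_comp_abs_of_integrableOn_Ioi {E : Type*} [NormedAddCommGroup E] {f : ℝ → E}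
    (hf : IntegrableOn f (Ioi 0)) : Integrable (fun x => f |x|) := by
  have hIoi : IntegrableOn (fun x => f |x|) (Ioi 0) :=
    hf.congr_fun (fun x hx => by rw [abs_of_pos hx]) measurableSet_Ioi
  have hIic : IntegrableOn (fun x => f |x|) (Iic 0) := by
    have hneg : MeasurableEmbedding fun x : ℝ => -x := (Homeomorph.neg ℝ).measurableEmbedding
    rw [← Measure.map_neg_eq_self (volume : Measure ℝ), hneg.integrableOn_map_iff]
    simp_rw [Function.comp_def, abs_neg, neg_preimage, neg_Iic, neg_zero]
    exact Iff.mpr integrableOn_Ici_iff_integrableOn_Ioi hIoi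
  simpa only [Iic_union_Ioi, integrableOn_univ] using hIic.union hIoi

lemma one_sub_exp_neg_sq_nonneg (x : ℝ) : 0 ≤ 1 - exp (-x ^ 2) := by
  simpa using sq_nonneg x

lemma one_sub_exp_neg_sq_le_sq (x : ℝ) : 1 - exp (-x ^ 2) ≤ x ^ 2 := by
  linarith [one_sub_le_exp_neg (x ^ 2)]

lemma one_sub_exp_neg_sq_le_one (x : ℝ) : 1 - exp (-x ^ 2) ≤ 1 := by
  linarith [exp_pos (-x ^ 2)]

lemma norm_one_sub_exp_neg_sq_mul_rpow_le_rpow {y : ℝ} (hy : 0 ≤ y) (s : ℝ) :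
    ‖(1 - exp (-y ^ 2)) * y ^ s‖ ≤ y ^ s := by
  rw [norm_mul, norm_of_nonneg (one_sub_exp_neg_sq_nonneg y), norm_of_nonneg (rpow_nonneg hy s)]
  exact mul_le_of_le_one_left (rpow_nonneg hy s) (one_sub_exp_neg_sq_le_one y)

lemma norm_one_sub_exp_neg_sq_mul_rpow_le_rpow_add_two {y : ℝ} (hy : 0 < y) (s : ℝ) :
    ‖(1 - exp (-y ^ 2)) * y ^ s‖ ≤ y ^ (s + 2) := by
  rw [norm_mul, norm_of_nonneg (one_sub_exp_neg_sq_nonneg y),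
    norm_of_nonneg (rpow_nonneg hy.le s), mul_comm, rpow_add hy, rpow_two]
  exact mul_le_mul_of_nonneg_left (one_sub_exp_neg_sq_le_sq y) (rpow_nonneg hy.le s)

lemma integrableOn_one_sub_exp_neg_sq_mul_rpow {s : ℝ} (hs₃ : -3 < s) (hs₁ : s < -1) :
    IntegrableOn (fun y : ℝ => (1 - exp (-y ^ 2)) * y ^ s) (Ioi 0) := by
  have hmeas : AEStronglyMeasurable (fun y : ℝ => (1 - exp (-y ^ 2)) * y ^ s) :=
    (by fun_prop : Measurable fun y : ℝ => (1 - exp (-y ^ 2)) * y ^ s).aestronglyMeasurable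
  rw [← Ioc_union_Ioi_eq_Ioi zero_le_one, integrableOn_union]
  constructor
  · have hdom : IntegrableOn (fun y : ℝ => y ^ (s + 2)) (Ioc 0 1) :=
      (intervalIntegrable_iff_integrableOn_Ioc_of_le zero_le_one).mp
        (intervalIntegral.intervalIntegrable_rpow' (by linarith))
    refine hdom.mono' hmeas.restrict ?_
    filter_upwards [ae_restrict_mem measurableSet_Ioc] with y hy
    exact norm_one_sub_exp_neg_sq_mul_rpow_le_rpow_add_two hy.1 s
  · refine (integrableOn_Ioi_rpow_of_lt hs₁ one_pos).mono' hmeas.restrict ?_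
    filter_upwards [ae_restrict_mem measurableSet_Ioi] with y hy
    exact norm_one_sub_exp_neg_sq_mul_rpow_le_rpow (zero_le_one.trans hy.le) s

lemma hasDerivAt_one_sub_exp_neg_sq (x : ℝ) :
    HasDerivAt (fun y : ℝ => 1 - exp (-y ^ 2)) (2 * x * exp (-x ^ 2)) x := by
  refine (((hasDerivAt_pow 2 x).fun_neg.exp).const_sub 1).congr_deriv ?_
  norm_num
  ring

lemma integrableOn_rpow_mul_exp_neg_sq {s : ℝ} (hs : -1 < s) :
    IntegrableOn (fun x : ℝ => x ^ s * exp (-x ^ 2)) (Ioi 0) := by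
  simpa using integrableOn_rpow_mul_exp_neg_mul_sq one_pos hs

lemma integral_rpow_mul_exp_neg_sq {s : ℝ} (hs : -1 < s) :
    ∫ x in Ioi (0 : ℝ), x ^ s * exp (-x ^ 2) = Gamma ((s + 1) / 2) / 2 := by
  have := integral_rpow_mul_exp_neg_rpow two_pos hs
  simp only [rpow_two] at this
  rw [this, one_div, inv_mul_eq_div]

lemma tendsto_one_sub_exp_neg_sq_mul_rpow_nhdsGT_zero {s : ℝ} (hs : -2 < s) :
    Tendsto (fun y : ℝ => (1 - exp (-y ^ 2)) * y ^ s) (𝓝[>] 0) (𝓝 0) := by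
  refine squeeze_zero_norm' ?_ (a := fun y => y ^ (s + 2)) ?_
  · filter_upwards [self_mem_nhdsWithin] with y hy
    exact norm_one_sub_exp_neg_sq_mul_rpow_le_rpow_add_two hy s
  · have := (continuousAt_rpow_const 0 (s + 2) (Or.inr (by linarith))).tendsto
    rw [zero_rpow (by linarith)] at this
    exact this.mono_left nhdsWithin_le_nhds

lemma tendsto_one_sub_exp_neg_sq_mul_rpow_atTop {s : ℝ} (hs : s < 0) :
    Tendsto (fun y : ℝ => (1 - exp (-y ^ 2)) * y ^ s) atTop (𝓝 0) := by
  refine squeeze_zero_norm' ?_ (a := fun y => y ^ s) ?_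
  · filter_upwards [eventually_ge_atTop 0] with y hy
    exact norm_one_sub_exp_neg_sq_mul_rpow_le_rpow hy s
  · simpa using tendsto_rpow_neg_atTop (neg_pos.2 hs)

lemma integral_one_sub_exp_neg_sq_mul_rpow {α : ℝ} (hα₀ : 0 < α) (hα₂ : α < 2) :
    ∫ y in Ioi (0 : ℝ), (1 - exp (-y ^ 2)) * y ^ (-1 - α) = Gamma ((2 - α) / 2) / α := by
  set u : ℝ → ℝ := fun y => 1 - exp (-y ^ 2)
  set v : ℝ → ℝ := fun y => -α⁻¹ * y ^ (-α)
  have hv : ∀ x ∈ Ioi (0 : ℝ), HasDerivAt v (x ^ (-1 - α)) x := fun x hx => by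
    refine ((hasDerivAt_rpow_const (Or.inl (ne_of_gt hx))).const_mul (-α⁻¹)).congr_deriv ?_
    field_simp
    ring_nf
  have huv : u * v = fun y => -α⁻¹ * ((1 - exp (-y ^ 2)) * y ^ (-α)) := by
    ext y
    simp only [u, v, Pi.mul_apply]
    ring
  have hu'v : EqOn (fun x => 2 * x * exp (-x ^ 2) * v x)
      (fun x => -(2 / α) * (x ^ (1 - α) * exp (-x ^ 2))) (Ioi 0) := fun x hx => by
    simp only [v]
    rw [sub_eq_add_neg, rpow_add hx, rpow_one]
    field_simp
  have h_zero : Tendsto (u * v) (𝓝[>] 0) (𝓝 0) := by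
    simpa [huv] using
      (tendsto_one_sub_exp_neg_sq_mul_rpow_nhdsGT_zero (by linarith)).const_mul (-α⁻¹)
  have h_infty : Tendsto (u * v) atTop (𝓝 0) := by
    simpa [huv] using
      (tendsto_one_sub_exp_neg_sq_mul_rpow_atTop (neg_neg_of_pos hα₀)).const_mul (-α⁻¹)
  rw [integral_Ioi_mul_deriv_eq_deriv_mul (fun x _ => hasDerivAt_one_sub_exp_neg_sq x) hv
      (integrableOn_one_sub_exp_neg_sq_mul_rpow (by linarith) (by linarith))
      (IntegrableOn.congr_fun ((integrableOn_rpow_mul_exp_neg_sq (by linarith)).const_mul _)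
        hu'v.symm measurableSet_Ioi) h_zero h_infty,
    setIntegral_congr_fun measurableSet_Ioi hu'v, integral_const_mul,
    integral_rpow_mul_exp_neg_sq (by linarith)]
  ring_nf

lemma Cna_mul_two_mul_Gamma_div {α : ℝ} (hα : α ≠ 0) (hα₂ : α < 2) :
    Cna α * (2 * (Gamma ((2 - α) / 2) / α)) = 2 ^ α * Gamma ((1 + α) / 2) / √π := by
  have hΓ : Gamma ((2 - α) / 2) ≠ 0 := (Gamma_pos_of_pos (by linarith)).ne'
  have hπ : √π ≠ 0 := (sqrt_pos.2 pi_pos).ne'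
  have h2 : (2 : ℝ) ^ α = 2 ^ (α - 1) * 2 := by
    rw [rpow_sub_one two_ne_zero]
    field_simp
  rw [Cna, h2, add_comm 1 α]
  field_simp

/-- The fractional Laplacian of the Gaussian `u(x) = e^{−x²}` at `x = 0`, via the singular
integral representation: `y ↦ (1 − e^{−y²})·|y|^{−1−α}` is integrable on `ℝ` and
`C₁,α ∫_ℝ (1 − e^{−y²}) |y|^{−1−α} dy = 2^α Γ((1+α)/2)/√π`. -/
theorem fractional_laplacian_gaussian_at_zero (α : ℝ) (hα0 : 0 < α) (hα2 : α < 2) :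
    Integrable (fun y : ℝ => (1 - Real.exp (-y ^ 2)) * |y| ^ (-1 - α)) ∧
    Cna α * (∫ y : ℝ, (1 - Real.exp (-y ^ 2)) * |y| ^ (-1 - α))
      = 2 ^ α * Real.Gamma ((1 + α) / 2) / Real.sqrt Real.pi := by
  have heven : (fun y : ℝ => (1 - Real.exp (-y ^ 2)) * |y| ^ (-1 - α))
      = fun y => (1 - Real.exp (-|y| ^ 2)) * |y| ^ (-1 - α) := by
    simp only [sq_abs]
  rw [heven, integral_comp_abs (f := fun t => (1 - Real.exp (-t ^ 2)) * t ^ (-1 - α)),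
    integral_one_sub_exp_neg_sq_mul_rpow hα0 hα2]
  exact ⟨integrable_comp_abs_of_integrableOn_Ioi
      (integrableOn_one_sub_exp_neg_sq_mul_rpow (by linarith) (by linarith)),
    Cna_mul_two_mul_Gamma_div hα0.ne' hα2⟩
end
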